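/- Let n ≥ 1 and let N be a term such that N a1 a2 … an =β a1 a2 … an (N a1 a2 … an) for distinct variables a1, …, an not free in N. Then the term N I^(n−1) (N applied to n−1 copies of I) is a fixed point combinator. -/
import Mathlib


/-- Untyped λ-terms in de Bruijn notation. -/
inductive Lam : Type
  | var : Nat → Lam
  | app : Lam → Lam → Lam
  | lam : Lam → Lam
  deriving DecidableEq

namespace Lam

/-- Lift (shift) free variables ≥ `d` by one. -/
def lift (d : Nat) : Lam → Lam
  | var n => if n < d then var n else var (n + 1)
  | app s t => app (lift d s) (lift d t)
  | lam t => lam (lift (d + 1) t)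

/-- Capture-avoiding substitution of `u` for the variable with index `k`. -/
def subst (k : Nat) (u : Lam) : Lam → Lam
  | var n => if n = k then u else if k < n then var (n - 1) else var n
  | app s t => app (subst k u s) (subst k u t)
  | lam t => lam (subst (k + 1) (lift 0 u) t)

/-- One-step β-reduction `→β` (compatible closure of the β-rule). -/
inductive Step : Lam → Lam → Prop
  | beta (t u : Lam) : Step (app (lam t) u) (subst 0 u t)
  | appL {s s' : Lam} (t : Lam) : Step s s' → Step (app s t) (app s' t)
  | appR (s : Lam) {t t' : Lam} : Step t t' → Step (app s t) (app s t')
  | lam {t t' : Lam} : Step t t' → Step (lam t) (lam t')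

/-- Many-step β-reduction `↠β`. -/
def Red : Lam → Lam → Prop := Relation.ReflTransGen Step

/-- β-convertibility `=β`. -/
def Conv : Lam → Lam → Prop := Relation.EqvGen Step

/-- `Y` is a fixed point combinator: `Y x =β x (Y x)` for a fresh variable `x`. -/
def isFPC (Y : Lam) : Prop :=
  Conv (app (lift 0 Y) (var 0)) (app (var 0) (app (lift 0 Y) (var 0)))

/-- `M P^n`: `M` applied to `n` copies of `P`. -/
def appIter (M P : Lam) : Nat → Lam
  | 0 => M
  | n + 1 => appIter (app M P) P n

/-- `I = λx.x` -/
def K_I : Lam := lam (var 0)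

/-- `S = λxyz.xz(yz)` -/
def K_S : Lam := lam (lam (lam (app (app (var 2) (var 0)) (app (var 1) (var 0)))))

/-- `B = λxyz.x(yz)` -/
def K_B : Lam := lam (lam (lam (app (var 2) (app (var 1) (var 0)))))

/-- `δ = λab.b(ab)` -/
def K_delta : Lam := lam (lam (app (var 0) (app (var 1) (var 0))))

/-- `ω_f = λx.f(xx)` (with `f` the variable bound just outside). -/
def K_omega : Lam := lam (app (var 1) (app (var 0) (var 0)))

/-- Curry's fpc `Y0 = λf.ω_f ω_f`. -/
def Y0 : Lam := lam (app K_omega K_omega)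

/-- `η = λxf.f(xxf)` -/
def K_eta : Lam := lam (lam (app (var 0) (app (app (var 1) (var 1)) (var 0))))

/-- Turing's fpc `Y1 = ηη`. -/
def Y1 : Lam := app K_eta K_eta

/-- One head reduction step: contraction of the head redex. -/
inductive Head : Lam → Lam → Prop
  | beta (t u : Lam) : Head (app (lam t) u) (subst 0 u t)
  | app {s s' : Lam} (t : Lam) : (∀ u, s ≠ lam u) → Head s s' → Head (app s t) (app s' t)
  | lam {t t' : Lam} : Head t t' → Head (lam t) (lam t')

/-- Exactly `k` head reduction steps. -/
def HeadN : Nat → Lam → Lam → Prop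
  | 0, s, t => s = t
  | k + 1, s, t => ∃ u, Head s u ∧ HeadN k u t

/-- Exactly `k` β-reduction steps. -/
def StepN : Nat → Lam → Lam → Prop
  | 0, s, t => s = t
  | k + 1, s, t => ∃ u, Step s u ∧ StepN k u t

/-- `n`-fold lifting of all free variables. -/
def liftn : Nat → Lam → Lam
  | 0, t => t
  | n + 1, t => lift 0 (liftn n t)

/-- `M (var (n-1)) (var (n-2)) ⋯ (var 0)`: `M` applied to `n` distinct fresh variables. -/
def appVars (M : Lam) (n : Nat) : Lam :=
  ((List.range n).reverse).foldl (fun acc i => app acc (var i)) M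

/-! ### Auxiliary lemmas -/

lemma lift_lift (t : Lam) : ∀ i j, i ≤ j →
    lift i (lift j t) = lift (j + 1) (lift i t) := by
  induction t with
  | var n =>
      intro i j h
      simp only [lift]
      split_ifs <;> simp only [lift] <;> split_ifs <;>
        first | rfl | omega | (exfalso; omega)
  | app s t ihs iht => intro i j h; simp [lift, ihs _ _ h, iht _ _ h]
  | lam t ih => intro i j h; simp [lift, ih (i+1) (j+1) (by omega)]

lemma lift_subst (t : Lam) : ∀ k d (u : Lam), d ≤ k →
    lift d (subst k u t) = subst (k + 1) (lift d u) (lift d t) := by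
  induction t with
  | var n =>
      intro k d u h
      simp only [subst, lift]
      split_ifs <;> simp only [subst, lift] <;> split_ifs <;>
        first | rfl | omega | (exfalso; omega) | (congr 1; omega)
  | app s t ihs iht => intro k d u h; simp [lift, subst, ihs _ _ _ h, iht _ _ _ h]
  | lam t ih =>
      intro k d u h
      simp only [lift, subst, ih (k+1) (d+1) (lift 0 u) (by omega)]
      rw [lift_lift u 0 d (by omega)]

lemma subst_lift (t : Lam) : ∀ k (u : Lam), subst k u (lift k t) = t := by
  induction t with
  | var n =>
      intro k u
      simp only [lift]
      split_ifs <;> simp only [subst] <;> split_ifs <;>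
        first | rfl | omega | (exfalso; omega) | (congr 1; omega)
  | app s t ihs iht => intro k u; simp [lift, subst, ihs, iht]
  | lam t ih => intro k u; simp [lift, subst, ih]

lemma subst_subst (t : Lam) : ∀ j k (u w : Lam), j ≤ k →
    subst k w (subst j u t) =
      subst j (subst k w u) (subst (k + 1) (lift j w) t) := by
  induction t with
  | var n =>
      intro j k u w h
      simp only [subst]
      split_ifs <;>
        first
          | (exfalso; omega)
          | rfl
          | (exact (subst_lift w j (subst k w u)).symm)
          | (simp only [subst]; split_ifs <;>
              first
                | rfl
                | (exfalso; omega)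
                | (congr 1; omega)
                | (exact (subst_lift w j (subst k w u)).symm))
  | app s t ihs iht => intro j k u w h; simp [subst, ihs _ _ _ _ h, iht _ _ _ _ h]
  | lam t ih =>
      intro j k u w h
      simp only [subst, ih (j+1) (k+1) (lift 0 u) (lift 0 w) (by omega)]
      rw [lift_subst u k 0 w (by omega), lift_lift w 0 j (by omega)]

lemma Step.substc {s t : Lam} (h : Step s t) (k : Nat) (u : Lam) :
    Step (subst k u s) (subst k u t) := by
  induction h generalizing k u with
  | beta t v =>
      rw [subst_subst t 0 k v u (by omega)]
      exact Step.beta (subst (k+1) (lift 0 u) t) (subst k u v)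
  | appL t _ ih => exact Step.appL _ (ih k u)
  | appR s _ ih => exact Step.appR _ (ih k u)
  | lam _ ih => exact Step.lam (ih (k+1) (lift 0 u))

lemma Conv.substc {s t : Lam} (h : Conv s t) (k : Nat) (u : Lam) :
    Conv (subst k u s) (subst k u t) := by
  induction h with
  | rel a b hab => exact Relation.EqvGen.rel _ _ (hab.substc k u)
  | refl a => exact Relation.EqvGen.refl _
  | symm a b _ ih => exact Relation.EqvGen.symm _ _ ih
  | trans a b c _ _ ih1 ih2 => exact Relation.EqvGen.trans _ _ _ ih1 ih2

lemma Conv.appLc {s s' : Lam} (t : Lam) (h : Conv s s') :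
    Conv (app s t) (app s' t) := by
  induction h with
  | rel a b hab => exact Relation.EqvGen.rel _ _ (Step.appL t hab)
  | refl a => exact Relation.EqvGen.refl _
  | symm a b _ ih => exact Relation.EqvGen.symm _ _ ih
  | trans a b c _ _ ih1 ih2 => exact Relation.EqvGen.trans _ _ _ ih1 ih2

lemma Red.appLc {s s' : Lam} (t : Lam) (h : Red s s') :
    Red (app s t) (app s' t) := by
  induction h with
  | refl => exact Relation.ReflTransGen.refl
  | tail _ h2 ih => exact Relation.ReflTransGen.tail ih (Step.appL t h2)

lemma Red.conv {s t : Lam} (h : Red s t) : Conv s t := by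
  induction h with
  | refl => exact Relation.EqvGen.refl _
  | tail _ h2 ih => exact Relation.EqvGen.trans _ _ _ ih (Relation.EqvGen.rel _ _ h2)

lemma lift_K_I (d : Nat) : lift d K_I = K_I := by simp [K_I, lift]

lemma subst_K_I (k : Nat) (u : Lam) : subst k u K_I = K_I := by
  simp [K_I, subst, lift]

lemma red_iterI : ∀ (j : Nat) (M t : Lam), Red M K_I →
    Red (app (appIter M K_I j) t) t := by
  intro j
  induction j with
  | zero =>
      intro M t h
      have h1 : Red (app M t) (app K_I t) := Red.appLc t h
      have h2 : Step (app K_I t) t := by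
        have := Step.beta (var 0) t
        simpa [K_I, subst] using this
      exact Relation.ReflTransGen.tail h1 h2
  | succ j ih =>
      intro M t h
      refine ih (app M K_I) t ?_
      have h1 : Red (app M K_I) (app K_I K_I) := Red.appLc _ h
      have h2 : Step (app K_I K_I) K_I := by
        have := Step.beta (var 0) K_I
        simpa [K_I, subst] using this
      exact Relation.ReflTransGen.tail h1 h2

lemma lift_appIter (d : Nat) : ∀ (j : Nat) (M P : Lam),
    lift d (appIter M P j) = appIter (lift d M) (lift d P) j := by
  intro j
  induction j with
  | zero => intro M P; rfl
  | succ j ih => intro M P; simp [appIter, ih, lift]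

lemma subst_appIter (k : Nat) (u : Lam) : ∀ (j : Nat) (M P : Lam),
    subst k u (appIter M P j) = appIter (subst k u M) (subst k u P) j := by
  intro j
  induction j with
  | zero => intro M P; rfl
  | succ j ih => intro M P; simp [appIter, ih, subst]

/-- `M (var m) (var (m-1)) ⋯ (var 1)`. -/
def vspine : Lam → Nat → Lam
  | M, 0 => M
  | M, m + 1 => vspine (app M (var (m + 1))) m

lemma appVars_succ (M : Lam) (m : Nat) :
    appVars M (m + 1) = appVars (app M (var m)) m := by
  simp [appVars, List.range_succ]

lemma appVars_eq_vspine : ∀ (m : Nat) (M : Lam),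
    appVars M (m + 1) = app (vspine M m) (var 0) := by
  intro m
  induction m with
  | zero => intro M; simp [appVars, vspine, List.range_succ]
  | succ m ih => intro M; rw [appVars_succ, ih]; rfl

lemma subst_vspine (u : Lam) : ∀ (m : Nat) (M : Lam),
    subst 1 u (vspine M (m + 1)) = app (vspine (subst 1 u M) m) u := by
  intro m
  induction m with
  | zero => intro M; simp [vspine, subst]
  | succ m ih =>
      intro M
      show subst 1 u (vspine (app M (var (m+2))) (m+1)) = _
      rw [ih]
      have : subst 1 u (app M (var (m + 2))) =
          app (subst 1 u M) (var (m + 1)) := by simp [subst]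
      rw [this]
      rfl

lemma lift_liftn (t : Lam) : ∀ (m k : Nat), k ≤ m →
    lift k (liftn m t) = liftn (m + 1) t := by
  intro m
  induction m with
  | zero => intro k h; interval_cases k; rfl
  | succ m ih =>
      intro k h
      match k with
      | 0 => rfl
      | k + 1 =>
          show lift (k+1) (lift 0 (liftn m t)) = _
          rw [← lift_lift (liftn m t) 0 k (by omega), ih k (by omega)]
          rfl

lemma subst_liftn (t u : Lam) (m k : Nat) (h : k < m) :
    subst k u (liftn m t) = liftn (m - 1) t := by
  obtain ⟨m, rfl⟩ : ∃ m', m = m' + 1 := ⟨m - 1, by omega⟩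
  rw [← lift_liftn t m k (by omega), subst_lift]
  simp

/-- The state of the left-hand term after substituting `I`s. -/
def Aterm (N : Lam) (r j : Nat) : Lam :=
  app (appIter (vspine (liftn (r + 1) N) r) K_I j) (var 0)

/-- The state of the head of the right-hand term after substituting `I`s. -/
def Gterm (r j : Nat) : Lam :=
  app (appIter (vspine (var (r + 1)) r) K_I j) (var 0)

lemma subst_Aterm (N : Lam) (r j : Nat) :
    subst 1 K_I (Aterm N (r + 1) j) = Aterm N r (j + 1) := by
  simp only [Aterm, subst, subst_appIter, subst_K_I]
  rw [subst_vspine K_I r (liftn (r + 2) N),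
    subst_liftn N K_I (r + 2) 1 (by omega)]
  norm_num
  rfl

lemma subst_Gterm (r j : Nat) :
    subst 1 K_I (Gterm (r + 1) j) = Gterm r (j + 1) := by
  simp only [Gterm, subst, subst_appIter, subst_K_I]
  rw [subst_vspine K_I r (var (r + 2))]
  have : subst 1 K_I (var (r + 2)) = var (r + 1) := by simp [subst]
  rw [this]
  norm_num
  rfl

lemma iter_subst_Aterm (N : Lam) : ∀ (k r j : Nat),
    (fun t => subst 1 K_I t)^[k] (Aterm N (r + k) j) = Aterm N r (j + k) := by
  intro k
  induction k with
  | zero => intro r j; rfl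
  | succ k ih =>
      intro r j
      rw [Function.iterate_succ_apply]
      have h1 : r + (k + 1) = (r + k) + 1 := by omega
      rw [h1]
      show (fun t => subst 1 K_I t)^[k] (subst 1 K_I (Aterm N (r + k + 1) j)) = _
      rw [subst_Aterm, ih r (j + 1)]
      congr 1
      omega

lemma iter_subst_Gterm : ∀ (k r j : Nat),
    (fun t => subst 1 K_I t)^[k] (Gterm (r + k) j) = Gterm r (j + k) := by
  intro k
  induction k with
  | zero => intro r j; rfl
  | succ k ih =>
      intro r j
      rw [Function.iterate_succ_apply]
      have h1 : r + (k + 1) = (r + k) + 1 := by omega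
      rw [h1]
      show (fun t => subst 1 K_I t)^[k] (subst 1 K_I (Gterm (r + k + 1) j)) = _
      rw [subst_Gterm, ih r (j + 1)]
      congr 1
      omega

lemma iter_subst_app (k : Nat) : ∀ (s t : Lam),
    (fun t => subst 1 K_I t)^[k] (app s t) =
      app ((fun t => subst 1 K_I t)^[k] s) ((fun t => subst 1 K_I t)^[k] t) := by
  induction k with
  | zero => intro s t; rfl
  | succ k ih =>
      intro s t
      rw [Function.iterate_succ_apply, Function.iterate_succ_apply,
        Function.iterate_succ_apply]
      exact ih _ _

lemma Conv.iter_substc {s t : Lam} (h : Conv s t) (k : Nat) :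
    Conv ((fun t => subst 1 K_I t)^[k] s) ((fun t => subst 1 K_I t)^[k] t) := by
  induction k with
  | zero => exact h
  | succ k ih =>
      rw [Function.iterate_succ_apply', Function.iterate_succ_apply']
      exact ih.substc 1 K_I

/-- If `N a1 … an =β a1 … an (N a1 … an)` for distinct fresh variables `a1,…,an` (`n ≥ 1`),
then `N I^(n-1)` is an fpc. -/
theorem pre_fpc_gives_fpc :
    ∀ n : Nat, 1 ≤ n → ∀ N : Lam,
      Conv (appVars (liftn n N) n)
           (app (appVars (var (n - 1)) (n - 1)) (appVars (liftn n N) n)) →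
      isFPC (appIter N K_I (n - 1)) := by
  intro n hn N H
  obtain ⟨m, rfl⟩ : ∃ m, n = m + 1 := ⟨n - 1, by omega⟩
  simp only [Nat.add_sub_cancel] at H ⊢
  rw [appVars_eq_vspine] at H
  have hA : app (vspine (liftn (m + 1) N) m) (var 0) = Aterm N m 0 := rfl
  rw [hA] at H
  unfold isFPC
  have goal_eq : app (lift 0 (appIter N K_I m)) (var 0) = Aterm N 0 m := by
    rw [lift_appIter, lift_K_I]; rfl
  rw [goal_eq]
  match m with
  | 0 => exact H
  | m' + 1 =>
      rw [appVars_eq_vspine] at H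
      have hG : app (vspine (var (m' + 1)) m') (var 0) = Gterm m' 0 := rfl
      rw [hG] at H
      have H2 := H.iter_substc (m' + 1)
      have e1 : (fun t => subst 1 K_I t)^[m' + 1] (Aterm N (m' + 1) 0)
          = Aterm N 0 (m' + 1) := by
        have := iter_subst_Aterm N (m' + 1) 0 0
        simpa using this
      have eG : (fun t => subst 1 K_I t)^[m' + 1] (Gterm m' 0)
          = app (appIter K_I K_I m') (var 0) := by
        rw [Function.iterate_succ_apply']
        have := iter_subst_Gterm m' 0 0
        simp only [Nat.zero_add, Nat.add_zero] at this
        rw [this]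
        have h1 : Gterm 0 m' = app (appIter (var 1) K_I m') (var 0) := rfl
        rw [h1]
        show app (subst 1 K_I (appIter (var 1) K_I m')) (subst 1 K_I (var 0)) = _
        rw [subst_appIter, subst_K_I]
        have h2 : subst 1 K_I (var 1) = K_I := by simp [subst]
        have h3 : subst 1 K_I (var 0) = var 0 := by simp [subst]
        rw [h2, h3]
      rw [e1, iter_subst_app, e1, eG] at H2
      have hred : Red (app (appIter K_I K_I m') (var 0)) (var 0) :=
        red_iterI m' K_I (var 0) Relation.ReflTransGen.refl
      have hc : Conv (app (app (appIter K_I K_I m') (var 0)) (Aterm N 0 (m' + 1)))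
          (app (var 0) (Aterm N 0 (m' + 1))) :=
        Conv.appLc _ hred.conv
      exact Relation.EqvGen.trans _ _ _ H2 hc

end Lam
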